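/- For radial u ∈ Ḣ¹ × L²(r ≥ a) on ℝ⁵, the orthogonal projection onto the plane P(a) = {(c₁ r^{−3}, c₂ r^{−3}) : c₁, c₂ ∈ ℝ} in Ḣ¹ × L²(r > a) is given by π_a(f,0) = a³ r^{−3} f(a) and π_a(0,g) = a r^{−3} ∫_a^∞ g(ρ) ρ dρ; consequently ‖π_a(f,g)‖²_{Ḣ¹×L²(r>a)} = 3a³ f(a)² + a (∫_a^∞ ρ g(ρ) dρ)². -/
import Mathlib


open Real Set MeasureTheory

private lemma rpow_neg_nat_eq {r : ℝ} (hr : 0 < r) (n : ℕ) :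
    r ^ (-(n:ℝ)) = (r ^ n)⁻¹ := by
  rw [Real.rpow_neg hr.le, Real.rpow_natCast]

/-- On ℝ⁵ (radial, exterior region `r > a`), the orthogonal projection of `(f,g)` onto the
plane `P(a) = {(c₁ r⁻³, c₂ r⁻³)}` in `Ḣ¹ × L²(r > a)` is given by
`π_a(f,0) = a³ r⁻³ f(a)` and `π_a(0,g) = a r⁻³ ∫_a^∞ ρ g(ρ) dρ`: the differences are
orthogonal to the plane, and the projection has the stated squared norm. -/
theorem stmt9 (a : ℝ) (ha : 0 < a) (f f' g : ℝ → ℝ)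
    (hcont : ContinuousOn f (Set.Ici a))
    (hderiv : ∀ r ∈ Set.Ioi a, HasDerivAt f (f' r) r)
    (hflim : Filter.Tendsto f Filter.atTop (nhds 0))
    (hf'int : IntegrableOn (fun r : ℝ => (f' r)^2 * r^4) (Set.Ioi a))
    (hgint : IntegrableOn (fun r : ℝ => (g r)^2 * r^4) (Set.Ioi a))
    (hrg : IntegrableOn (fun r : ℝ => r * g r) (Set.Ioi a)) :
    -- orthogonality of `f - π_a(f,0)` to the plane (in the `Ḣ¹(r>a)` inner product)
    (∫ r in Set.Ioi a, (f' r - (-(3 * a^3 * f a) * r ^ (-4:ℝ))) *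
        (-3 * r ^ (-4:ℝ)) * r^4 = 0) ∧
    -- orthogonality of `g - π_a(0,g)` to the plane (in the `L²(r>a)` inner product)
    (∫ r in Set.Ioi a, (g r - a * (∫ ρ in Set.Ioi a, ρ * g ρ) * r ^ (-3:ℝ)) *
        r ^ (-3:ℝ) * r^4 = 0) ∧
    -- the squared norm of the projection
    ((∫ r in Set.Ioi a, (-(3 * a^3 * f a) * r ^ (-4:ℝ))^2 * r^4) +
      (∫ r in Set.Ioi a, (a * (∫ ρ in Set.Ioi a, ρ * g ρ) * r ^ (-3:ℝ))^2 * r^4) =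
      3 * a^3 * (f a)^2 + a * (∫ ρ in Set.Ioi a, ρ * g ρ)^2) := by
  set I : ℝ := ∫ ρ in Set.Ioi a, ρ * g ρ with hI
  -- integrability of basic powers
  have i4 : IntegrableOn (fun r : ℝ => r ^ (-4:ℝ)) (Set.Ioi a) :=
    integrableOn_Ioi_rpow_of_lt (by norm_num) ha
  have i3 : IntegrableOn (fun r : ℝ => r ^ (-3:ℝ)) (Set.Ioi a) :=
    integrableOn_Ioi_rpow_of_lt (by norm_num) ha
  have i2 : IntegrableOn (fun r : ℝ => r ^ (-2:ℝ)) (Set.Ioi a) :=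
    integrableOn_Ioi_rpow_of_lt (by norm_num) ha
  -- values of the power integrals
  have int4 : ∫ r in Set.Ioi a, r ^ (-4:ℝ) = (a^3)⁻¹ / 3 := by
    rw [integral_Ioi_rpow_of_lt (by norm_num) ha, show (-4:ℝ)+1 = -((3:ℕ):ℝ) by norm_num,
      Real.rpow_neg ha.le, Real.rpow_natCast]
    ring
  have int2 : ∫ r in Set.Ioi a, r ^ (-2:ℝ) = a⁻¹ := by
    rw [integral_Ioi_rpow_of_lt (by norm_num) ha, show (-2:ℝ)+1 = -((1:ℕ):ℝ) by norm_num,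
      Real.rpow_neg ha.le, Real.rpow_natCast]
    ring
  -- integrability of f'
  have hmeas : AEStronglyMeasurable f' (volume.restrict (Set.Ioi a)) := by
    have hae : f' =ᵐ[volume.restrict (Set.Ioi a)] deriv f :=
      (ae_restrict_mem measurableSet_Ioi).mono fun r hr => ((hderiv r hr).deriv).symm
    exact (measurable_deriv f).aestronglyMeasurable.congr hae.symm
  have hf'i : IntegrableOn f' (Set.Ioi a) := by
    refine Integrable.mono' ((hf'int.add i4).div_const 2) hmeas ?_
    filter_upwards [ae_restrict_mem measurableSet_Ioi] with r hr
    have hr0 : 0 < r := ha.trans hr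
    have h4 : r ^ (-4:ℝ) = (r^4)⁻¹ := by
      rw [show (-4:ℝ) = -((4:ℕ):ℝ) by norm_num, rpow_neg_nat_eq hr0]
    have hinv : r^2 * (r^2)⁻¹ = 1 := mul_inv_cancel₀ (pow_ne_zero 2 hr0.ne')
    have hsq : ((r^2)⁻¹)^2 = (r^4)⁻¹ := by
      rw [inv_pow, ← pow_mul]
    have expand2 : (|f' r| * r^2 - (r^2)⁻¹)^2
        = (f' r)^2 * r^4 - 2 * |f' r| + ((r^2)⁻¹)^2 := by
      linear_combination r^4 * sq_abs (f' r) - 2 * |f' r| * hinv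
    have h0 : 0 ≤ (f' r)^2 * r^4 - 2 * |f' r| + ((r^2)⁻¹)^2 := by
      rw [← expand2]; exact sq_nonneg _
    simp only [Pi.add_apply]
    rw [Real.norm_eq_abs, h4]
    linarith [h0, hsq]
  -- fundamental theorem of calculus on (a, ∞)
  have hFTC : ∫ r in Set.Ioi a, f' r = -f a := by
    have := integral_Ioi_of_hasDerivAt_of_tendsto
      (hcont.continuousWithinAt (self_mem_Ici)) hderiv hf'i hflim
    simpa using this
  -- useful powers of a
  have ha3 : a^3 * (a^3)⁻¹ = 1 := mul_inv_cancel₀ (pow_ne_zero 3 ha.ne')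
  have ha1 : a * a⁻¹ = 1 := mul_inv_cancel₀ ha.ne'
  refine ⟨?_, ?_, ?_⟩
  · -- first orthogonality
    have e1 : EqOn (fun r : ℝ => (f' r - (-(3 * a^3 * f a) * r ^ (-4:ℝ))) *
        (-3 * r ^ (-4:ℝ)) * r^4)
        (fun r : ℝ => (-3) * f' r + (-(9 * a^3 * f a)) * r ^ (-4:ℝ)) (Set.Ioi a) := by
      intro r hr
      have hr0 : 0 < r := ha.trans hr
      have h4 : r ^ (-4:ℝ) = (r^4)⁻¹ := by
        rw [show (-4:ℝ) = -((4:ℕ):ℝ) by norm_num, rpow_neg_nat_eq hr0]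
      simp only [h4]
      field_simp
      ring
    rw [setIntegral_congr_fun measurableSet_Ioi e1,
      integral_add ((hf'i.const_mul (-3))) (i4.const_mul _),
      integral_const_mul, integral_const_mul, hFTC, int4]
    linear_combination (-3 * f a) * ha3
  · -- second orthogonality
    have e2 : EqOn (fun r : ℝ => (g r - a * I * r ^ (-3:ℝ)) * r ^ (-3:ℝ) * r^4)
        (fun r : ℝ => r * g r - (a * I) * r ^ (-2:ℝ)) (Set.Ioi a) := by
      intro r hr
      have hr0 : 0 < r := ha.trans hr
      have h3 : r ^ (-3:ℝ) = (r^3)⁻¹ := by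
        rw [show (-3:ℝ) = -((3:ℕ):ℝ) by norm_num, rpow_neg_nat_eq hr0]
      have h2 : r ^ (-2:ℝ) = (r^2)⁻¹ := by
        rw [show (-2:ℝ) = -((2:ℕ):ℝ) by norm_num, rpow_neg_nat_eq hr0]
      simp only [h3, h2]
      field_simp
    rw [setIntegral_congr_fun measurableSet_Ioi e2,
      integral_sub hrg (i2.const_mul _), integral_const_mul, int2, ← hI]
    linear_combination (-I) * ha1
  · -- squared norm of the projection
    have e3 : EqOn (fun r : ℝ => (-(3 * a^3 * f a) * r ^ (-4:ℝ))^2 * r^4)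
        (fun r : ℝ => (9 * a^6 * (f a)^2) * r ^ (-4:ℝ)) (Set.Ioi a) := by
      intro r hr
      have hr0 : 0 < r := ha.trans hr
      have h4 : r ^ (-4:ℝ) = (r^4)⁻¹ := by
        rw [show (-4:ℝ) = -((4:ℕ):ℝ) by norm_num, rpow_neg_nat_eq hr0]
      simp only [h4]
      field_simp
      ring
    have e4 : EqOn (fun r : ℝ => (a * I * r ^ (-3:ℝ))^2 * r^4)
        (fun r : ℝ => (a^2 * I^2) * r ^ (-2:ℝ)) (Set.Ioi a) := by
      intro r hr
      have hr0 : 0 < r := ha.trans hr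
      have h3 : r ^ (-3:ℝ) = (r^3)⁻¹ := by
        rw [show (-3:ℝ) = -((3:ℕ):ℝ) by norm_num, rpow_neg_nat_eq hr0]
      have h2 : r ^ (-2:ℝ) = (r^2)⁻¹ := by
        rw [show (-2:ℝ) = -((2:ℕ):ℝ) by norm_num, rpow_neg_nat_eq hr0]
      simp only [h3, h2]
      field_simp
    rw [setIntegral_congr_fun measurableSet_Ioi e3, setIntegral_congr_fun measurableSet_Ioi e4,
      integral_const_mul, integral_const_mul, int4, int2]
    linear_combination (3 * (f a)^2 * a^3) * ha3 + I^2 * a * ha1
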